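/- Let M' = (V, I') and M'' = (V, I'') be two matroids and suppose a common independent set S' ∈ I' ∩ I'' is obtained from S ∈ I' ∩ I'' by augmenting along a shortest (s, t)-path in the exchange graph G(S) (so |S'| > |S|). Let d denote distance in G(S) and d' denote distance in G(S'). Then for all v ∈ V: (i) if d(s, v) < d(s, t) then d'(s, v) ≥ d(s, v), and if d(v, t) < d(s, t) then d'(v, t) ≥ d(v, t); (ii) if d(s, v) ≥ d(s, t) then d'(s, v) ≥ d(s, t), and if d(v, t) ≥ d(s, t) then d'(v, t) ≥ d(s, t). -/

import Mathlib

/-- A matroid on a finite ground set `V`, given by its family of independent sets. -/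
structure FinMatroid (V : Type*) [DecidableEq V] [Fintype V] where
  Indep : Finset V → Prop
  indep_empty : Indep ∅
  indep_subset : ∀ ⦃S T : Finset V⦄, Indep S → T ⊆ S → Indep T
  indep_aug : ∀ ⦃S T : Finset V⦄, Indep S → Indep T → T.card < S.card →
    ∃ x ∈ S \ T, Indep (insert x T)

/-- `reachIn Adj n x y` : there is a directed walk with exactly `n` edges from `x` to `y`. -/
def reachIn {α : Type*} (Adj : α → α → Prop) : ℕ → α → α → Prop
  | 0, x, y => x = y
  | n + 1, x, y => ∃ z, Adj x z ∧ reachIn Adj n z y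

/-- Distance (number of edges of a shortest directed path) from `x` to `y`; `⊤` if none. -/
noncomputable def ddist {α : Type*} (Adj : α → α → Prop) (x y : α) : ℕ∞ :=
  sInf {n : ℕ∞ | ∃ m : ℕ, n = (m : ℕ∞) ∧ reachIn Adj m x y}

/-- Vertices of the exchange graph: the ground elements plus a source `src` and a sink `snk`. -/
inductive XVert (V : Type*) where
  | elt : V → XVert V
  | src : XVert V
  | snk : XVert V

/-- The exchange graph `G(S)` of two matroids relative to a common independent set `S`. -/
def exchangeAdj {V : Type*} [DecidableEq V] [Fintype V]
    (M₁ M₂ : FinMatroid V) (S : Finset V) : XVert V → XVert V → Prop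
  | XVert.elt a, XVert.elt b =>
      (a ∈ S ∧ b ∉ S ∧ M₁.Indep (insert b (S.erase a))) ∨
      (a ∉ S ∧ b ∈ S ∧ M₂.Indep (insert a (S.erase b)))
  | XVert.src, XVert.elt b => b ∉ S ∧ M₁.Indep (insert b S)
  | XVert.elt a, XVert.snk => a ∉ S ∧ M₂.Indep (insert a S)
  | _, _ => False

/-!
Write `d` and `d'` for distances in `G(S)` and `G(S')`, and `D = d(s, t)`. The potential
`x ↦ min (d(s, x), D)` vanishes at `s` and grows by at most one along every arc of `G(S')`, so it
is a lower bound for `d'(s, ·)`; this gives the statements about `d(s, v)`, and those about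
`d(v, t)` are the same statements for the reversed exchange graph, in which the roles of the two
matroids are swapped.

An arc of `G(S')` violating this yields an independent set of one of the matroids (such as
`S' - a + b`) containing the elements of `S'` on one side of a level of `d` and one element outside
`S'`. Every element of `V \ S` on that side has its fundamental circuit with respect to `S` on the
same side (its exchanges in `G(S)` only reach such elements), so no independent set on that side
is larger than the part of `S` there. But along the shortest path the elements of `S \ S'` and
`S' \ S` alternate, with `d` increasing by one at each step, so `S'` has at least as many
elements on that side as `S`, and the extra element is one too many.
-/

open Finset

section Distance

variable {α : Type*} {Adj : α → α → Prop}

theorem reachIn_one {x y : α} (h : Adj x y) : reachIn Adj 1 x y := ⟨y, h, rfl⟩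

theorem reachIn_add {m n : ℕ} {x y z : α} (hxy : reachIn Adj m x y) (hyz : reachIn Adj n y z) :
    reachIn Adj (m + n) x z := by
  induction m generalizing x with
  | zero => cases hxy; simpa using hyz
  | succ m ih =>
    obtain ⟨w, hxw, hwy⟩ := hxy
    rw [Nat.succ_add]
    exact ⟨w, hxw, ih hwy⟩

theorem List.IsChain.reachIn_getElem {L : List α} (h : L.IsChain Adj) {i j : ℕ} (hij : i ≤ j)
    (hj : j < L.length) : reachIn Adj (j - i) L[i] L[j] := by
  induction j with
  | zero => obtain rfl := Nat.le_zero.1 hij; exact rfl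
  | succ j ih =>
    rcases hij.eq_or_lt with rfl | hij
    · rw [Nat.sub_self]; exact rfl
    · rw [Nat.sub_add_comm (Nat.lt_succ_iff.1 hij)]
      exact reachIn_add (ih (Nat.lt_succ_iff.1 hij) (by omega))
        (reachIn_one (List.isChain_iff_getElem.1 h j hj))

theorem reachIn_reverse {Adj' : α → α → Prop} {f : α → α}
    (hf : ∀ x y, Adj x y → Adj' (f y) (f x)) {m : ℕ} {x y : α} (h : reachIn Adj m x y) :
    reachIn Adj' m (f y) (f x) := by
  induction m generalizing x with
  | zero => cases h; exact rfl
  | succ m ih =>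
    obtain ⟨z, hxz, hzy⟩ := h
    exact reachIn_add (ih hzy) (reachIn_one (hf _ _ hxz))

theorem iff_even_of_reachIn {p : α → Prop} (hp : ∀ x y, Adj x y → (p y ↔ ¬ p x)) {n : ℕ}
    {x y : α} (h : reachIn Adj n x y) : p y ↔ (p x ↔ Even n) := by
  induction n generalizing x with
  | zero => cases h; simp
  | succ n ih =>
    obtain ⟨z, hxz, hzy⟩ := h
    rw [ih hzy, hp x z hxz, Nat.even_add_one]
    tauto

theorem ddist_le_of_reachIn {m : ℕ} {x y : α} (h : reachIn Adj m x y) : ddist Adj x y ≤ m :=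
  sInf_le ⟨m, rfl, h⟩

theorem ddist_eq_top_or_reachIn (x y : α) :
    ddist Adj x y = ⊤ ∨ ∃ m : ℕ, ddist Adj x y = m ∧ reachIn Adj m x y := by
  rcases Set.eq_empty_or_nonempty {n : ℕ∞ | ∃ m : ℕ, n = m ∧ reachIn Adj m x y} with h | h
  · left
    rw [ddist, h, sInf_empty]
  · right
    exact csInf_mem h

theorem ddist_self (x : α) : ddist Adj x x = 0 :=
  nonpos_iff_eq_zero.1 (ddist_le_of_reachIn (m := 0) rfl)

theorem ddist_triangle (x y z : α) : ddist Adj x z ≤ ddist Adj x y + ddist Adj y z := by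
  rcases ddist_eq_top_or_reachIn (Adj := Adj) x y with hxy | ⟨m, hxy, hm⟩
  · simp [hxy]
  rcases ddist_eq_top_or_reachIn (Adj := Adj) y z with hyz | ⟨n, hyz, hn⟩
  · simp [hyz]
  rw [hxy, hyz, ← Nat.cast_add]
  exact ddist_le_of_reachIn (reachIn_add hm hn)

theorem ddist_le_ddist_add_one {x y z : α} (h : Adj y z) : ddist Adj x z ≤ ddist Adj x y + 1 :=
  (ddist_triangle x y z).trans (by gcongr; exact_mod_cast ddist_le_of_reachIn (reachIn_one h))

theorem le_add_ddist {g : α → ℕ∞} (hg : ∀ u v, Adj u v → g v ≤ g u + 1) (x y : α) :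
    g y ≤ g x + ddist Adj x y := by
  have hwalk : ∀ m x, reachIn Adj m x y → g y ≤ g x + m := by
    intro m
    induction m with
    | zero => rintro x rfl; simp
    | succ m ih =>
      rintro x ⟨z, hxz, hzy⟩
      calc g y ≤ g z + m := ih z hzy
        _ ≤ g x + 1 + m := by gcongr; exact hg x z hxz
        _ = g x + (m + 1 : ℕ) := by push_cast; ring
  rcases ddist_eq_top_or_reachIn (Adj := Adj) x y with h | ⟨m, h, hm⟩
  · simp [h]
  · rw [h]
    exact hwalk m x hm

theorem ddist_le_ddist_of_reverse {Adj' : α → α → Prop} {f : α → α}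
    (hf : ∀ x y, Adj x y → Adj' (f y) (f x)) (x y : α) :
    ddist Adj' (f y) (f x) ≤ ddist Adj x y := by
  rcases ddist_eq_top_or_reachIn (Adj := Adj) x y with h | ⟨m, h, hm⟩
  · simp [h]
  · rw [h]
    exact ddist_le_of_reachIn (reachIn_reverse hf hm)

theorem ddist_reverse {Adj' : α → α → Prop} {f : α → α} (hf : Function.Involutive f)
    (hAdj : ∀ x y, Adj x y ↔ Adj' (f y) (f x)) (x y : α) :
    ddist Adj x y = ddist Adj' (f y) (f x) := by
  refine le_antisymm ?_ (ddist_le_ddist_of_reverse (fun x y => (hAdj x y).1) x y)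
  have h := ddist_le_ddist_of_reverse (Adj := Adj') (Adj' := Adj)
    (fun x y h => by rwa [hAdj (f y), hf, hf]) (f y) (f x)
  rwa [hf x, hf y] at h

end Distance

namespace FinMatroid

variable {V : Type*} [DecidableEq V] [Fintype V] (M : FinMatroid V)

theorem exists_indep_superset_card_le {I S : Finset V} (hI : M.Indep I) (hS : M.Indep S) :
    ∃ C, M.Indep C ∧ I ⊆ C ∧ C ⊆ I ∪ S ∧ #S ≤ #C := by
  obtain ⟨n, hn⟩ : ∃ n, #S ≤ #I + n := ⟨#S, by omega⟩
  induction n generalizing I with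
  | zero => exact ⟨I, hI, subset_rfl, subset_union_left, hn⟩
  | succ n ih =>
    by_cases hle : #S ≤ #I
    · exact ⟨I, hI, subset_rfl, subset_union_left, hle⟩
    obtain ⟨x, hx, hxI⟩ := M.indep_aug hS hI (by omega)
    obtain ⟨hxS, hxI'⟩ := mem_sdiff.1 hx
    obtain ⟨C, hC, hIC, hCS, hcard⟩ := ih hxI (by rw [card_insert_of_notMem hxI']; omega)
    refine ⟨C, hC, (subset_insert x I).trans hIC, hCS.trans ?_, hcard⟩
    rw [insert_union, insert_eq_of_mem (mem_union_right I hxS)]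

/-- The fundamental circuit of `w` with respect to `S` lies in `insert w X`; an element `u ∈ S`
belongs to that circuit exactly when the exchange `S - u + w` is independent. -/
def FundCircuitSubset (S X : Finset V) (w : V) : Prop :=
  w ∉ S ∧ ¬ M.Indep (insert w S) ∧ ∀ u ∈ S, M.Indep (insert w (S.erase u)) → u ∈ X

variable {M}

theorem not_indep_insert_of_fundCircuitSubset {S X : Finset V} {w : V} (hS : M.Indep S)
    (hX : X ⊆ S) (hw : M.FundCircuitSubset S X w) : ¬ M.Indep (insert w X) := by
  obtain ⟨hwS, hdep, hexch⟩ := hw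
  intro hwX
  obtain ⟨C, hC, hwXC, hCwS, hcard⟩ := M.exists_indep_superset_card_le hwX hS
  rw [insert_union, union_eq_right.2 hX] at hCwS
  by_cases hSC : S ⊆ C
  · exact hdep (M.indep_subset hC (insert_subset (hwXC (mem_insert_self w X)) hSC))
  obtain ⟨u, huS, huC⟩ := not_subset.1 hSC
  have hC_eq : C = insert w (S.erase u) := by
    refine eq_of_subset_of_card_le (fun x hx => ?_) ?_
    · rcases mem_insert.1 (hCwS hx) with rfl | hxS
      · exact mem_insert_self x _
      · exact mem_insert_of_mem (mem_erase.2 ⟨by rintro rfl; exact huC hx, hxS⟩)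
    · rw [card_insert_of_notMem (fun h => hwS (mem_of_mem_erase h)), card_erase_of_mem huS]
      have := card_pos.2 ⟨u, huS⟩
      omega
  exact huC (hwXC (mem_insert_of_mem (hexch u huS (hC_eq ▸ hC))))

theorem card_le_of_subset_union {S X P A : Finset V} (hS : M.Indep S) (hX : X ⊆ S)
    (hP : ∀ w ∈ P, M.FundCircuitSubset S X w) (hA : M.Indep A) (hAXP : A ⊆ X ∪ P) :
    #A ≤ #X := by
  by_contra! hlt
  obtain ⟨w, hw, hwX⟩ := M.indep_aug hA (M.indep_subset hS hX) hlt
  obtain ⟨hwA, hwX'⟩ := mem_sdiff.1 hw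
  have hwP : w ∈ P := (mem_union.1 (hAXP hwA)).resolve_left hwX'
  exact not_indep_insert_of_fundCircuitSubset hS hX (hP w hwP) hwX

theorem card_inter_lt_card_sdiff {S X P T S' : Finset V} {b : V} (hS : M.Indep S) (hX : X ⊆ S)
    (hP : ∀ w ∈ P, M.FundCircuitSubset S X w) (hT : M.Indep T) (hS'T : S' ∩ (X ∪ P) ⊆ T)
    (hbT : b ∈ T) (hb : b ∈ X ∪ P) (hbS' : b ∉ S') : #(S' ∩ P) < #(X \ S') := by
  have hXP : Disjoint X P := disjoint_left.2 fun x hxX hxP => (hP x hxP).1 (hX hxX)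
  have hA := card_le_of_subset_union hS hX hP (A := insert b (S' ∩ (X ∪ P)))
    (M.indep_subset hT (insert_subset hbT hS'T)) (insert_subset hb inter_subset_right)
  rw [card_insert_of_notMem (fun h => hbS' (mem_inter.1 h).1), inter_union_distrib_left,
    card_union_of_disjoint (hXP.mono inter_subset_right inter_subset_right)] at hA
  have := card_inter_add_card_sdiff X S'
  rw [inter_comm] at this
  omega

end FinMatroid

section Counting

variable {β : Type*} {A B : Finset β} {f : β → ℕ∞}

theorem card_filter_lt_le_of_exists_succ (hf : Set.InjOn f A)
    (h : ∀ a ∈ A, ∃ b ∈ B, f b = f a + 1) (c : ℕ∞) :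
    #{a ∈ A | c < f a} ≤ #{b ∈ B | c + 1 < f b} := by
  refine card_le_card_of_forall_subsingleton (fun a b => f b = f a + 1) (fun a ha => ?_) ?_
  · obtain ⟨haA, hca⟩ := mem_filter.1 ha
    obtain ⟨b, hbB, hb⟩ := h a haA
    refine ⟨b, mem_filter.2 ⟨hbB, ?_⟩, hb⟩
    rwa [hb, ENat.add_lt_add_iff_right ENat.one_ne_top]
  · rintro b - a ⟨ha, hab⟩ a' ⟨ha', ha'b⟩
    refine hf (mem_filter.1 ha).1 (mem_filter.1 ha').1 (le_antisymm ?_ ?_)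
    · rw [← ENat.add_le_add_iff_right ENat.one_ne_top, ← hab, ← ha'b]
    · rw [← ENat.add_le_add_iff_right ENat.one_ne_top, ← hab, ← ha'b]

theorem card_filter_le_le_of_exists_pred (hf : Set.InjOn f A)
    (h : ∀ a ∈ A, ∃ b ∈ B, f b + 1 = f a) (c : ℕ∞) :
    #{a ∈ A | f a ≤ c + 1} ≤ #{b ∈ B | f b ≤ c} := by
  refine card_le_card_of_forall_subsingleton (fun a b => f b + 1 = f a) (fun a ha => ?_) ?_
  · obtain ⟨haA, hac⟩ := mem_filter.1 ha
    obtain ⟨b, hbB, hb⟩ := h a haA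
    refine ⟨b, mem_filter.2 ⟨hbB, ?_⟩, hb⟩
    rwa [← hb, ENat.add_le_add_iff_right ENat.one_ne_top] at hac
  · rintro b - a ⟨ha, hab⟩ a' ⟨ha', ha'b⟩
    exact hf (mem_filter.1 ha).1 (mem_filter.1 ha').1 (hab.symm.trans ha'b)

end Counting

namespace XVert

variable {V : Type*}

def swap : XVert V → XVert V
  | elt a => elt a
  | src => snk
  | snk => src

theorem swap_involutive : Function.Involutive (swap : XVert V → XVert V) := by
  intro x
  cases x <;> rfl

def InS (S : Finset V) : XVert V → Prop
  | elt a => a ∈ S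
  | _ => True

end XVert

open XVert

section ExchangeGraph

variable {V : Type*} [DecidableEq V] [Fintype V] {M₁ M₂ : FinMatroid V} {S : Finset V}

theorem exchangeAdj_iff_swap {x y : XVert V} :
    exchangeAdj M₁ M₂ S x y ↔ exchangeAdj M₂ M₁ S y.swap x.swap := by
  cases x <;> cases y <;> simp only [exchangeAdj, swap]; tauto

theorem ddist_exchangeAdj_swap (x y : XVert V) :
    ddist (exchangeAdj M₁ M₂ S) x y = ddist (exchangeAdj M₂ M₁ S) y.swap x.swap :=
  ddist_reverse swap_involutive (fun _ _ => exchangeAdj_iff_swap) x y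

theorem inS_iff_of_exchangeAdj {x y : XVert V} (h : exchangeAdj M₁ M₂ S x y) :
    y.InS S ↔ ¬ x.InS S := by
  cases x <;> cases y <;> simp only [exchangeAdj, InS] at h ⊢ <;> tauto

theorem fundCircuitSubset_of_add_one_lt_ddist (c : ℕ∞) {w : V} (hwS : w ∉ S)
    (hw : c + 1 < ddist (exchangeAdj M₁ M₂ S) src (elt w)) :
    M₁.FundCircuitSubset S {u ∈ S | c < ddist (exchangeAdj M₁ M₂ S) src (elt u)} w := by
  refine ⟨hwS, fun hind => ?_, fun u hu hind => mem_filter.2 ⟨hu, ?_⟩⟩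
  · have h := ddist_le_ddist_add_one (x := src) (show exchangeAdj M₁ M₂ S src (elt w) from
      ⟨hwS, hind⟩)
    rw [ddist_self, zero_add] at h
    exact absurd (hw.trans_le h) (not_lt.2 le_add_self)
  · have h := ddist_le_ddist_add_one (x := src)
      (show exchangeAdj M₁ M₂ S (elt u) (elt w) from Or.inl ⟨hu, hwS, hind⟩)
    exact (ENat.add_lt_add_iff_right ENat.one_ne_top).1 (hw.trans_le h)

theorem fundCircuitSubset_of_ddist_le {c : ℕ∞}
    (hc : c + 1 < ddist (exchangeAdj M₁ M₂ S) src snk) {w : V} (hwS : w ∉ S)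
    (hw : ddist (exchangeAdj M₁ M₂ S) src (elt w) ≤ c) :
    M₂.FundCircuitSubset S {u ∈ S | ddist (exchangeAdj M₁ M₂ S) src (elt u) ≤ c + 1} w := by
  refine ⟨hwS, fun hind => ?_, fun u hu hind => mem_filter.2 ⟨hu, ?_⟩⟩
  · have h := ddist_le_ddist_add_one (x := src) (show exchangeAdj M₁ M₂ S (elt w) snk from
      ⟨hwS, hind⟩)
    exact absurd (hc.trans_le (h.trans (by gcongr))) (lt_irrefl _)
  · exact (ddist_le_ddist_add_one (x := src)
      (show exchangeAdj M₁ M₂ S (elt w) (elt u) from Or.inr ⟨hwS, hu, hind⟩)).trans (by gcongr)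

end ExchangeGraph

section AugmentingPath

variable {V : Type*} [DecidableEq V] [Fintype V]

structure IsShortestAugmentingPath (M₁ M₂ : FinMatroid V) (S : Finset V) (vs : List V) : Prop where
  isChain : (src :: (vs.map elt ++ [snk])).IsChain (exchangeAdj M₁ M₂ S)
  ddist_src_snk : ddist (exchangeAdj M₁ M₂ S) src snk = ((vs.length + 1 : ℕ) : ℕ∞)

namespace IsShortestAugmentingPath

variable {M₁ M₂ : FinMatroid V} {S S' T : Finset V}
  {vs : List V} (hp : IsShortestAugmentingPath M₁ M₂ S vs)
include hp

theorem reachIn_src_getElem {i : ℕ} (hi : i < vs.length) :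
    reachIn (exchangeAdj M₁ M₂ S) (i + 1) src (elt vs[i]) := by
  have h := hp.isChain.reachIn_getElem (i := 0) (j := i + 1) (by omega) (by simp; omega)
  rwa [List.getElem_cons_succ, List.getElem_append_left (by simpa using hi),
    List.getElem_map] at h

theorem reachIn_getElem_snk {i : ℕ} (hi : i < vs.length) :
    reachIn (exchangeAdj M₁ M₂ S) (vs.length - i) (elt vs[i]) snk := by
  have h := hp.isChain.reachIn_getElem (i := i + 1) (j := vs.length + 1) (by omega) (by simp)
  rw [List.getElem_cons_succ, List.getElem_append_left (by simpa using hi), List.getElem_map,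
    List.getElem_cons_succ, List.getElem_append_right (by simp), Nat.add_sub_add_right] at h
  simpa using h

theorem odd_length : Odd vs.length := by
  have h := hp.isChain.reachIn_getElem (i := 0) (j := vs.length + 1) (by omega) (by simp)
  rw [List.getElem_cons_succ, List.getElem_append_right (by simp)] at h
  simpa [InS, Nat.even_add_one] using
    iff_even_of_reachIn (p := InS S) (fun _ _ => inS_iff_of_exchangeAdj) h

theorem ddist_src_getElem {i : ℕ} (hi : i < vs.length) :
    ddist (exchangeAdj M₁ M₂ S) src (elt vs[i]) = (i + 1 : ℕ) := by
  refine le_antisymm (ddist_le_of_reachIn (hp.reachIn_src_getElem hi)) ?_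
  have h := (ddist_triangle src (elt vs[i]) snk).trans
    (add_le_add_right (ddist_le_of_reachIn (hp.reachIn_getElem_snk hi)) _)
  rw [hp.ddist_src_snk] at h
  generalize ddist (exchangeAdj M₁ M₂ S) src (elt vs[i]) = e at h ⊢
  induction e with
  | top => exact le_top
  | coe m => norm_cast at h ⊢; omega

theorem getElem_mem_iff {i : ℕ} (hi : i < vs.length) : vs[i] ∈ S ↔ Odd i := by
  simpa [InS, Nat.even_add_one] using
    iff_even_of_reachIn (p := InS S) (fun _ _ => inS_iff_of_exchangeAdj)
      (hp.reachIn_src_getElem hi)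

theorem injOn_ddist_src :
    Set.InjOn (fun x => ddist (exchangeAdj M₁ M₂ S) src (elt x)) {x | x ∈ vs} := by
  rintro _ hx _ hy hxy
  obtain ⟨i, hi, rfl⟩ := List.mem_iff_getElem.1 hx
  obtain ⟨j, hj, rfl⟩ := List.mem_iff_getElem.1 hy
  simp only [hp.ddist_src_getElem hi, hp.ddist_src_getElem hj, Nat.cast_inj] at hxy
  simp only [Nat.add_right_cancel hxy]

theorem exists_succ_of_mem_sdiff (hS' : S' = symmDiff S vs.toFinset) {u : V} (hu : u ∈ S \ S') :
    ∃ w ∈ S' \ S, ddist (exchangeAdj M₁ M₂ S) src (elt w)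
      = ddist (exchangeAdj M₁ M₂ S) src (elt u) + 1 := by
  subst hS'
  obtain ⟨huS, huvs⟩ : u ∈ S ∧ u ∈ vs := by simpa [mem_symmDiff] using hu
  obtain ⟨i, hi, rfl⟩ := List.mem_iff_getElem.1 huvs
  have hodd := (hp.getElem_mem_iff hi).1 huS
  have hi' : i + 1 < vs.length := by
    have := hp.odd_length
    rw [Nat.odd_iff] at this hodd
    omega
  refine ⟨vs[i + 1], ?_, ?_⟩
  · have : vs[i + 1] ∉ S := by
      rw [hp.getElem_mem_iff hi', Nat.odd_add_one, not_not]
      exact hodd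
    simp [this, List.getElem_mem]
  · rw [hp.ddist_src_getElem hi, hp.ddist_src_getElem hi']
    push_cast
    rfl

theorem exists_pred_of_mem_sdiff (hS' : S' = symmDiff S vs.toFinset) {u : V} (hu : u ∈ S \ S') :
    ∃ w ∈ S' \ S, ddist (exchangeAdj M₁ M₂ S) src (elt w) + 1
      = ddist (exchangeAdj M₁ M₂ S) src (elt u) := by
  subst hS'
  obtain ⟨huS, huvs⟩ : u ∈ S ∧ u ∈ vs := by simpa [mem_symmDiff] using hu
  obtain ⟨i, hi, rfl⟩ := List.mem_iff_getElem.1 huvs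
  have hodd := (hp.getElem_mem_iff hi).1 huS
  obtain ⟨j, rfl⟩ := hodd
  have hj : 2 * j < vs.length := by omega
  refine ⟨vs[2 * j], ?_, ?_⟩
  · have : vs[2 * j] ∉ S := by
      rw [hp.getElem_mem_iff hj, Nat.not_odd_iff_even]
      exact even_two_mul j
    simp [this, List.getElem_mem]
  · rw [hp.ddist_src_getElem hi, hp.ddist_src_getElem hj]
    push_cast
    rfl

theorem card_filter_lt_ddist_le (hS' : S' = symmDiff S vs.toFinset) (c : ℕ∞) :
    #{u ∈ S \ S' | c < ddist (exchangeAdj M₁ M₂ S) src (elt u)}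
      ≤ #{w ∈ S' \ S | c + 1 < ddist (exchangeAdj M₁ M₂ S) src (elt w)} :=
  card_filter_lt_le_of_exists_succ
    (hp.injOn_ddist_src.mono fun x hx => by subst hS'; simp_all)
    (fun _ hu => hp.exists_succ_of_mem_sdiff hS' hu) c

theorem card_filter_ddist_le_le (hS' : S' = symmDiff S vs.toFinset) (c : ℕ∞) :
    #{u ∈ S \ S' | ddist (exchangeAdj M₁ M₂ S) src (elt u) ≤ c + 1}
      ≤ #{w ∈ S' \ S | ddist (exchangeAdj M₁ M₂ S) src (elt w) ≤ c} :=
  card_filter_le_le_of_exists_pred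
    (hp.injOn_ddist_src.mono fun x hx => by subst hS'; simp_all)
    (fun _ hu => hp.exists_pred_of_mem_sdiff hS' hu) c

theorem ddist_src_le_add_one_of_indep (hS₁ : M₁.Indep S) (hS' : S' = symmDiff S vs.toFinset)
    (hT : M₁.Indep T) {c : ℕ∞}
    (hS'T : ∀ x ∈ S', c < ddist (exchangeAdj M₁ M₂ S) src (elt x) → x ∈ T) {b : V}
    (hbT : b ∈ T) (hbS' : b ∉ S') : ddist (exchangeAdj M₁ M₂ S) src (elt b) ≤ c + 1 := by
  set d := fun x => ddist (exchangeAdj M₁ M₂ S) src (elt x)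
  by_contra! hb
  have hc : c < c + 1 := ENat.lt_add_one_iff (by rintro rfl; simp at hb) |>.2 le_rfl
  set X := S.filter fun u => c < d u
  set P := (univ \ S).filter fun w => c + 1 < d w
  have hP : ∀ w ∈ P, M₁.FundCircuitSubset S X w := fun w hw => by
    obtain ⟨hwS, hw⟩ : w ∉ S ∧ c + 1 < d w := by simpa [P] using hw
    exact fundCircuitSubset_of_add_one_lt_ddist c hwS hw
  have hlt := M₁.card_inter_lt_card_sdiff (X := X) hS₁ (filter_subset _ S) hP hT
    (fun x hx => ?_) hbT ?_ hbS'
  · have hXS' : X \ S' = {u ∈ S \ S' | c < d u} := by ext; simp [X, and_right_comm]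
    have hS'P : S' ∩ P = {w ∈ S' \ S | c + 1 < d w} := by ext; simp [P, and_assoc]
    have := hp.card_filter_lt_ddist_le hS' c
    rw [← hXS', ← hS'P] at this
    omega
  · obtain ⟨hxS', hxXP⟩ := mem_inter.1 hx
    refine hS'T x hxS' ?_
    rcases mem_union.1 hxXP with hxX | hxP
    · exact (mem_filter.1 hxX).2
    · exact hc.trans (mem_filter.1 hxP).2
  · by_cases hbS : b ∈ S
    · exact mem_union_left _ (mem_filter.2 ⟨hbS, hc.trans hb⟩)
    · exact mem_union_right _ (mem_filter.2 ⟨mem_sdiff.2 ⟨mem_univ b, hbS⟩, hb⟩)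

theorem lt_ddist_src_of_indep (hS₂ : M₂.Indep S) (hS' : S' = symmDiff S vs.toFinset)
    (hT : M₂.Indep T) {c : ℕ∞} (hc : c + 1 < ddist (exchangeAdj M₁ M₂ S) src snk)
    (hS'T : ∀ x ∈ S', ddist (exchangeAdj M₁ M₂ S) src (elt x) ≤ c + 1 → x ∈ T) {a : V}
    (haT : a ∈ T) (haS' : a ∉ S') : c < ddist (exchangeAdj M₁ M₂ S) src (elt a) := by
  set d := fun x => ddist (exchangeAdj M₁ M₂ S) src (elt x)
  by_contra! ha
  have hc1 : c ≤ c + 1 := le_self_add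
  set X := S.filter fun u => d u ≤ c + 1
  set P := (univ \ S).filter fun w => d w ≤ c
  have hP : ∀ w ∈ P, M₂.FundCircuitSubset S X w := fun w hw => by
    obtain ⟨hwS, hw⟩ : w ∉ S ∧ d w ≤ c := by simpa [P] using hw
    exact fundCircuitSubset_of_ddist_le hc hwS hw
  have hlt := M₂.card_inter_lt_card_sdiff (X := X) hS₂ (filter_subset _ S) hP hT
    (fun x hx => ?_) haT ?_ haS'
  · have hXS' : X \ S' = {u ∈ S \ S' | d u ≤ c + 1} := by ext; simp [X, and_right_comm]
    have hS'P : S' ∩ P = {w ∈ S' \ S | d w ≤ c} := by ext; simp [P, and_assoc]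
    have := hp.card_filter_ddist_le_le hS' c
    rw [← hXS', ← hS'P] at this
    omega
  · obtain ⟨hxS', hxXP⟩ := mem_inter.1 hx
    refine hS'T x hxS' ?_
    rcases mem_union.1 hxXP with hxX | hxP
    · exact (mem_filter.1 hxX).2
    · exact (mem_filter.1 hxP).2.trans hc1
  · by_cases haS : a ∈ S
    · exact mem_union_left _ (mem_filter.2 ⟨haS, ha.trans hc1⟩)
    · exact mem_union_right _ (mem_filter.2 ⟨mem_sdiff.2 ⟨mem_univ a, haS⟩, ha⟩)

theorem min_ddist_le_min_ddist_add_one (hS₁ : M₁.Indep S) (hS₂ : M₂.Indep S)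
    (hS' : S' = symmDiff S vs.toFinset) {u x : XVert V} (h : exchangeAdj M₁ M₂ S' u x) :
    min (ddist (exchangeAdj M₁ M₂ S) src x) (ddist (exchangeAdj M₁ M₂ S) src snk)
      ≤ min (ddist (exchangeAdj M₁ M₂ S) src u) (ddist (exchangeAdj M₁ M₂ S) src snk) + 1 := by
  set d := ddist (exchangeAdj M₁ M₂ S) src
  rw [← min_add_add_right]
  refine le_min ?_ ((min_le_right _ _).trans le_self_add)
  cases u <;> cases x <;> simp only [exchangeAdj] at h
  case src.elt b =>
    have hb := hp.ddist_src_le_add_one_of_indep hS₁ hS' h.2 (c := 0)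
      (fun x hx _ => mem_insert_of_mem hx) (mem_insert_self b S') h.1
    rw [show d src = 0 from ddist_self src]
    exact (min_le_left _ _).trans hb
  case elt.snk a =>
    refine (min_le_right _ _).trans (le_of_not_gt fun hlt => ?_)
    exact lt_irrefl _ (hp.lt_ddist_src_of_indep hS₂ hS' h.2 hlt
      (fun x hx _ => mem_insert_of_mem hx) (mem_insert_self a S') h.1)
  case elt.elt a b =>
    rcases h with ⟨haS', hbS', hind⟩ | ⟨haS', hbS', hind⟩
    · refine (min_le_left _ _).trans (hp.ddist_src_le_add_one_of_indep hS₁ hS' hind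
        (fun x hx hax => mem_insert_of_mem (mem_erase.2 ⟨?_, hx⟩)) (mem_insert_self b _) hbS')
      rintro rfl
      exact lt_irrefl _ hax
    · refine le_of_not_gt fun hlt => lt_irrefl (d (elt a)) ?_
      obtain ⟨hltb, hltD⟩ := lt_min_iff.1 hlt
      refine hp.lt_ddist_src_of_indep hS₂ hS' hind hltD
        (fun x hx hxa => mem_insert_of_mem (mem_erase.2 ⟨?_, hx⟩)) (mem_insert_self a _) haS'
      rintro rfl
      exact not_le.2 hltb hxa

theorem min_ddist_le_ddist_augment (hS₁ : M₁.Indep S) (hS₂ : M₂.Indep S)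
    (hS' : S' = symmDiff S vs.toFinset) (x : XVert V) :
    min (ddist (exchangeAdj M₁ M₂ S) src x) (ddist (exchangeAdj M₁ M₂ S) src snk)
      ≤ ddist (exchangeAdj M₁ M₂ S') src x := by
  simpa [ddist_self] using le_add_ddist
    (g := fun y => min (ddist (exchangeAdj M₁ M₂ S) src y) (ddist (exchangeAdj M₁ M₂ S) src snk))
    (fun _ _ h => hp.min_ddist_le_min_ddist_add_one hS₁ hS₂ hS' h) src x

theorem reverse : IsShortestAugmentingPath M₂ M₁ S vs.reverse := by
  refine ⟨?_, ?_⟩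
  · have hL : src :: (vs.reverse.map elt ++ [snk])
        = ((src :: (vs.map elt ++ [snk])).map swap).reverse := by
      simp [List.map_reverse, Function.comp_def, swap]
    rw [hL, List.isChain_reverse, List.isChain_map]
    exact hp.isChain.imp fun _ _ => exchangeAdj_iff_swap.1
  · rw [ddist_exchangeAdj_swap, List.length_reverse]
    exact hp.ddist_src_snk

end IsShortestAugmentingPath

end AugmentingPath

theorem monotonicity_matroid_intersection_general {V : Type*} [DecidableEq V] [Fintype V]
    (M₁ M₂ : FinMatroid V) (S : Finset V) (hS₁ : M₁.Indep S) (hS₂ : M₂.Indep S)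
    (vs : List V)
    (hchain : List.Chain' (exchangeAdj M₁ M₂ S)
      (XVert.src :: (vs.map XVert.elt ++ [XVert.snk])))
    (hshort : ddist (exchangeAdj M₁ M₂ S) XVert.src XVert.snk = ((vs.length + 1 : ℕ) : ℕ∞))
    (S' : Finset V) (hS' : S' = symmDiff S vs.toFinset) :
    ∀ v : V,
      (ddist (exchangeAdj M₁ M₂ S) XVert.src (XVert.elt v)
          < ddist (exchangeAdj M₁ M₂ S) XVert.src XVert.snk →
        ddist (exchangeAdj M₁ M₂ S) XVert.src (XVert.elt v)
          ≤ ddist (exchangeAdj M₁ M₂ S') XVert.src (XVert.elt v)) ∧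
      (ddist (exchangeAdj M₁ M₂ S) (XVert.elt v) XVert.snk
          < ddist (exchangeAdj M₁ M₂ S) XVert.src XVert.snk →
        ddist (exchangeAdj M₁ M₂ S) (XVert.elt v) XVert.snk
          ≤ ddist (exchangeAdj M₁ M₂ S') (XVert.elt v) XVert.snk) ∧
      (ddist (exchangeAdj M₁ M₂ S) XVert.src XVert.snk
          ≤ ddist (exchangeAdj M₁ M₂ S) XVert.src (XVert.elt v) →
        ddist (exchangeAdj M₁ M₂ S) XVert.src XVert.snk
          ≤ ddist (exchangeAdj M₁ M₂ S') XVert.src (XVert.elt v)) ∧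
      (ddist (exchangeAdj M₁ M₂ S) XVert.src XVert.snk
          ≤ ddist (exchangeAdj M₁ M₂ S) (XVert.elt v) XVert.snk →
        ddist (exchangeAdj M₁ M₂ S) XVert.src XVert.snk
          ≤ ddist (exchangeAdj M₁ M₂ S') (XVert.elt v) XVert.snk) := by
  intro v
  have hp : IsShortestAugmentingPath M₁ M₂ S vs := ⟨hchain, hshort⟩
  have hsrc := hp.min_ddist_le_ddist_augment hS₁ hS₂ hS' (elt v)
  have hsnk := hp.reverse.min_ddist_le_ddist_augment (S' := S') hS₂ hS₁
    (by rw [List.toFinset_reverse]; exact hS') (elt v)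
  simp only [ddist_exchangeAdj_swap (M₁ := M₂), swap] at hsnk
  exact ⟨fun h => by rwa [min_eq_left h.le] at hsrc, fun h => by rwa [min_eq_left h.le] at hsnk,
    fun h => by rwa [min_eq_right h] at hsrc, fun h => by rwa [min_eq_right h] at hsnk⟩

/-- Monotonicity lemma for matroid intersection: after augmenting along a shortest
`(s,t)`-path, distances from `s` and to `t` do not decrease (below the old `d(s,t)`). -/
theorem monotonicity_matroid_intersection {V : Type*} [DecidableEq V] [Fintype V]
    (M₁ M₂ : FinMatroid V) (S : Finset V) (hS₁ : M₁.Indep S) (hS₂ : M₂.Indep S)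
    (vs : List V) (hne : vs ≠ []) (hnd : vs.Nodup)
    (hchain : List.Chain' (exchangeAdj M₁ M₂ S)
      (XVert.src :: (vs.map XVert.elt ++ [XVert.snk])))
    (hshort : ddist (exchangeAdj M₁ M₂ S) XVert.src XVert.snk = ((vs.length + 1 : ℕ) : ℕ∞))
    (S' : Finset V) (hS' : S' = symmDiff S vs.toFinset)
    (hS'₁ : M₁.Indep S') (hS'₂ : M₂.Indep S') :
    ∀ v : V,
      (ddist (exchangeAdj M₁ M₂ S) XVert.src (XVert.elt v)
          < ddist (exchangeAdj M₁ M₂ S) XVert.src XVert.snk →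
        ddist (exchangeAdj M₁ M₂ S) XVert.src (XVert.elt v)
          ≤ ddist (exchangeAdj M₁ M₂ S') XVert.src (XVert.elt v)) ∧
      (ddist (exchangeAdj M₁ M₂ S) (XVert.elt v) XVert.snk
          < ddist (exchangeAdj M₁ M₂ S) XVert.src XVert.snk →
        ddist (exchangeAdj M₁ M₂ S) (XVert.elt v) XVert.snk
          ≤ ddist (exchangeAdj M₁ M₂ S') (XVert.elt v) XVert.snk) ∧
      (ddist (exchangeAdj M₁ M₂ S) XVert.src XVert.snk
          ≤ ddist (exchangeAdj M₁ M₂ S) XVert.src (XVert.elt v) →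
        ddist (exchangeAdj M₁ M₂ S) XVert.src XVert.snk
          ≤ ddist (exchangeAdj M₁ M₂ S') XVert.src (XVert.elt v)) ∧
      (ddist (exchangeAdj M₁ M₂ S) XVert.src XVert.snk
          ≤ ddist (exchangeAdj M₁ M₂ S) (XVert.elt v) XVert.snk →
        ddist (exchangeAdj M₁ M₂ S) XVert.src XVert.snk
          ≤ ddist (exchangeAdj M₁ M₂ S') (XVert.elt v) XVert.snk) :=
  monotonicity_matroid_intersection_general M₁ M₂ S hS₁ hS₂ vs hchain hshort S' hS'
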